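/- arXiv:1906.06970 — 3 statements merged into one kernel-verified Lean document; each statement's English description precedes it below -/
import Mathlib

section
/- Fix an integer M ≥ 1 and ε > 0, and let p_W be a pmf with full support on a set W of size M. Then there exists a conditional pmf P_{X|W} from W to an alphabet X of size M such that the M×M stochastic matrix (P_{X|W}(x|w))_{x,w} has rank M, and the mutual information I(X;W) < ε, where (W,X) has joint pmf p_W(w)·P_{X|W}(x|w). -/
/-! The channels `symmChannel δ` interpolate between the useless channel (`δ = 0`, output uniform
and independent of the input) and the identity channel (`δ = 1`). For every `δ ∈ (0, 1)` the
stochastic matrix `δ • 1 + ((1 - δ) / M) • J`, with `J` the all-ones matrix, is invertible,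
while the mutual information is continuous in `δ` and vanishes at `δ = 0`, so it is below `ε`
for small `δ > 0`. -/

open Finset

/-- A probability mass function on a finite alphabet. -/
def IsPMF {α : Type*} [Fintype α] (p : α → ℝ) : Prop :=
  (∀ a, 0 ≤ p a) ∧ ∑ a, p a = 1

/-- Shannon entropy in bits. -/
noncomputable def ent {α : Type*} [Fintype α] (p : α → ℝ) : ℝ :=
  -∑ a, p a * Real.logb 2 (p a)

open Filter Topology

/-- Mutual information `I(X;W)` of the joint law `p w * P w x`, where `P w` is the law of `X`
given `W = w`. -/
noncomputable def mutualInfo {α β : Type*} [Fintype α] [Fintype β] (p : α → ℝ)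
    (P : α → β → ℝ) : ℝ :=
  ent (fun x => ∑ w, p w * P w x) + ent p - ent (fun wx : α × β => p wx.1 * P wx.1 wx.2)

theorem Continuous.ent {X α : Type*} [TopologicalSpace X] [Fintype α] {f : X → α → ℝ}
    (hf : Continuous f) : Continuous fun t => ent (f t) := by
  have hlog : Continuous fun y : ℝ => y * Real.logb 2 y := by
    simpa only [Real.logb, mul_div_assoc] using Real.continuous_mul_log.div_const (Real.log 2)
  exact (continuous_finsetSum _ fun a _ => hlog.comp (continuous_apply a |>.comp hf)).neg

theorem Continuous.mutualInfo {X α β : Type*} [TopologicalSpace X] [Fintype α] [Fintype β]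
    (p : α → ℝ) {P : X → α → β → ℝ} (hP : Continuous P) :
    Continuous fun t => mutualInfo p (P t) := by
  unfold _root_.mutualInfo
  refine ((Continuous.ent ?_).add continuous_const).sub (Continuous.ent ?_) <;> fun_prop

theorem ent_prod_mul {α β : Type*} [Fintype α] [Fintype β] {p : α → ℝ} {q : β → ℝ}
    (hp : ∑ a, p a = 1) (hq : ∑ b, q b = 1) :
    ent (fun ab : α × β => p ab.1 * q ab.2) = ent p + ent q := by
  have hterm : ∀ a b, p a * q b * Real.logb 2 (p a * q b)
      = q b * (p a * Real.logb 2 (p a)) + p a * (q b * Real.logb 2 (q b)) := by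
    intro a b
    rcases eq_or_ne (p a) 0 with ha | ha
    · simp [ha]
    rcases eq_or_ne (q b) 0 with hb | hb
    · simp [hb]
    rw [Real.logb_mul ha hb]
    ring
  simp only [_root_.ent, Fintype.sum_prod_type, hterm, sum_add_distrib, ← sum_mul, ← mul_sum,
    hp, hq]
  ring

theorem mutualInfo_const {α β : Type*} [Fintype α] [Fintype β] {p : α → ℝ} {q : β → ℝ}
    (hp : ∑ a, p a = 1) (hq : ∑ b, q b = 1) : mutualInfo p (fun _ => q) = 0 := by
  have hmarg : (fun x => ∑ w, p w * q x) = q := by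
    ext x
    rw [← sum_mul, hp, one_mul]
  rw [mutualInfo, hmarg, ent_prod_mul hp hq]
  ring

theorem Matrix.isUnit_smul_one_add_of_const {n K : Type*} [Fintype n] [DecidableEq n] [Field K]
    {δ c : K} (hδ : δ ≠ 0) (hc : δ + Fintype.card n * c ≠ 0) :
    IsUnit (δ • (1 : Matrix n n K) + Matrix.of fun _ _ => c) := by
  rw [Matrix.isUnit_iff_isUnit_det, isUnit_iff_ne_zero, ne_eq, ← Matrix.exists_mulVec_eq_zero_iff]
  rintro ⟨v, hv, hker⟩
  have hpoint : ∀ i, δ * v i + c * ∑ j, v j = 0 := fun i => by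
    rw [Matrix.add_mulVec, Matrix.smul_mulVec, Matrix.one_mulVec] at hker
    simpa [Matrix.mulVec, dotProduct, mul_sum] using congrFun hker i
  have hsum : ∑ j, v j = 0 := by
    have := sum_congr rfl fun i (_ : i ∈ univ) => hpoint i
    simp only [sum_add_distrib, ← mul_sum, sum_const, card_univ, nsmul_eq_mul] at this
    exact (mul_eq_zero.mp (by linear_combination this)).resolve_left hc
  exact hv (funext fun i => by simpa [hsum, hδ] using hpoint i)

section SymmChannel

variable {α : Type*} [Fintype α] [DecidableEq α]

noncomputable def symmChannel (δ : ℝ) (w x : α) : ℝ :=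
  (1 - δ) / Fintype.card α + δ * if x = w then 1 else 0

theorem continuous_symmChannel : Continuous (symmChannel (α := α)) := by
  unfold symmChannel
  fun_prop

theorem symmChannel_zero : symmChannel (α := α) 0 = fun _ _ => (Fintype.card α : ℝ)⁻¹ := by
  ext w x
  simp [symmChannel]

theorem isPMF_symmChannel [Nonempty α] {δ : ℝ} (hδ0 : 0 ≤ δ) (hδ1 : δ ≤ 1) (w : α) :
    IsPMF (symmChannel δ w) := by
  have hcard : (0 : ℝ) < Fintype.card α := by exact_mod_cast Fintype.card_pos
  refine ⟨fun x => by unfold symmChannel; positivity, ?_⟩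
  simp only [symmChannel, sum_add_distrib, mul_ite, mul_one, mul_zero, sum_ite_eq', mem_univ,
    if_true, sum_const, card_univ, nsmul_eq_mul]
  field_simp
  ring

theorem mutualInfo_symmChannel_zero [Nonempty α] {p : α → ℝ} (hp : ∑ a, p a = 1) :
    mutualInfo p (symmChannel 0) = 0 := by
  rw [symmChannel_zero]
  exact mutualInfo_const hp (by simp)

theorem rank_symmChannel [Nonempty α] {δ : ℝ} (hδ : δ ≠ 0) :
    (Matrix.of fun x w : α => symmChannel δ w x).rank = Fintype.card α := by
  have hcard : (Fintype.card α : ℝ) ≠ 0 := by exact_mod_cast Fintype.card_ne_zero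
  have hmatrix : (Matrix.of fun x w : α => symmChannel δ w x)
      = δ • 1 + Matrix.of fun _ _ => (1 - δ) / Fintype.card α := by
    ext x w
    simp [symmChannel, Matrix.one_apply, add_comm]
  rw [hmatrix]
  refine Matrix.rank_of_isUnit _ (Matrix.isUnit_smul_one_add_of_const hδ ?_)
  rw [mul_div_cancel₀ _ hcard]
  simp

end SymmChannel

theorem stmt3_general (M : ℕ) (hM : 1 ≤ M) (ε : ℝ) (hε : 0 < ε)
    (pW : Fin M → ℝ) (hpW : IsPMF pW) :
    ∃ P : Fin M → Fin M → ℝ,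
      (∀ w, IsPMF (P w)) ∧
      (Matrix.of fun x w : Fin M => P w x).rank = M ∧
      ent (fun x => ∑ w, pW w * P w x) + ent pW
        - ent (fun wx : Fin M × Fin M => pW wx.1 * P wx.1 wx.2) < ε := by
  have : Nonempty (Fin M) := ⟨⟨0, hM⟩⟩
  have hsmall : ∀ᶠ δ in 𝓝[>] 0, mutualInfo pW (symmChannel δ) < ε :=
    nhdsWithin_le_nhds <| (continuous_symmChannel.mutualInfo pW).tendsto 0 |>.eventually <|
      gt_mem_nhds (by rwa [mutualInfo_symmChannel_zero hpW.2])
  obtain ⟨δ, hI, hδ0, hδ1⟩ := (hsmall.and (Ioo_mem_nhdsGT one_pos)).exists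
  refine ⟨symmChannel δ, isPMF_symmChannel hδ0.le hδ1.le, ?_, hI⟩
  simpa using rank_symmChannel (α := Fin M) hδ0.ne'

/-- for any full-support `p_W` on an alphabet of size `M` and any `ε > 0`,
there is a conditional pmf `P_{X|W}` whose `M × M` stochastic matrix has full rank `M`
while `I(X;W) = H(X) + H(W) - H(X,W) < ε`. -/
theorem stmt3 (M : ℕ) (hM : 1 ≤ M) (ε : ℝ) (hε : 0 < ε)
    (pW : Fin M → ℝ) (hpW : IsPMF pW) (hfull : ∀ w, 0 < pW w) :
    ∃ P : Fin M → Fin M → ℝ,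
      (∀ w, IsPMF (P w)) ∧
      (Matrix.of fun x w : Fin M => P w x).rank = M ∧
      ent (fun x => ∑ w, pW w * P w x) + ent pW
        - ent (fun wx : Fin M × Fin M => pW wx.1 * P wx.1 wx.2) < ε :=
  stmt3_general M hM ε hε pW hpW
end

section
/- A bijection f : {0,1}^n → {0,1}^n satisfies d_H(f(x^n), f(y^n)) = d_H(x^n, y^n) for all x^n, y^n ∈ {0,1}^n if and only if f is a signed coordinate permutation, i.e., there exist a permutation σ of {1,…,n} and a vector b ∈ {0,1}^n such that f(x^n)_i = x_{σ(i)} ⊕ b_i for all x^n and all i. -/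
/-!
Replacing `f` by `x ↦ f x ⊕ f 0` reduces to an isometry `g` fixing `0`. Such a `g` preserves
Hamming weight, so it maps each unit vector `e_j` to some unit vector `e_{τ j}`, and `τ` is a
permutation. A coordinate can be read off metrically: `x_k = 1` iff `d(x, e_k) < d(x, 0)`.
Hence `(g x)_{τ j} = x_j`.
-/

open Finset

section Hamming

variable {ι : Type*} [Fintype ι]

theorem hammingDist_comp_equiv {ι' : Type*} [Fintype ι'] {β : Type*} [DecidableEq β]
    (σ : ι' ≃ ι) (x y : ι → β) : hammingDist (x ∘ σ) (y ∘ σ) = hammingDist x y :=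
  card_equiv σ (by simp)

theorem hammingDist_xor_right (x y b : ι → Bool) :
    hammingDist (fun i => xor (x i) (b i)) (fun i => xor (y i) (b i)) = hammingDist x y :=
  hammingDist_comp (fun i a => xor a (b i)) fun _ _ _ => Bool.xor_left_inj.mp

variable [DecidableEq ι]

theorem hammingDist_update_add {β : ι → Type*} [∀ i, DecidableEq (β i)] (x y : ∀ i, β i)
    (k : ι) (v : β k) :
    hammingDist x (Function.update y k v) + (if x k ≠ y k then 1 else 0) =
      hammingDist x y + (if x k ≠ v then 1 else 0) := by
  simp only [hammingDist, card_filter, Fintype.sum_eq_add_sum_compl k, Function.update_self]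
  have hrest : ∑ i ∈ {k}ᶜ, (if x i ≠ Function.update y k v i then 1 else 0) =
      ∑ i ∈ {k}ᶜ, (if x i ≠ y i then 1 else 0) :=
    sum_congr rfl fun i hi => by rw [Function.update_of_ne (by simpa using hi)]
  rw [hrest]
  ring

theorem apply_eq_true_iff_hammingDist_single_lt (x : ι → Bool) (k : ι) :
    x k = true ↔ hammingDist x (Pi.single k true) < hammingNorm x := by
  have h := hammingDist_update_add x 0 k true
  rw [← Pi.single, hammingDist_zero_right] at h
  cases hk : x k <;> simp [hk, Bool.zero_eq_false] at h ⊢ <;> omega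

theorem hammingNorm_single (k : ι) : hammingNorm (Pi.single k true : ι → Bool) = 1 := by
  rw [hammingNorm, card_eq_one]
  exact ⟨k, by ext i; simp [Pi.single_apply]⟩

theorem exists_eq_single_of_hammingNorm_eq_one {x : ι → Bool} (h : hammingNorm x = 1) :
    ∃ k, x = Pi.single k true := by
  obtain ⟨k, hk⟩ := card_eq_one.mp h
  refine ⟨k, funext fun i => ?_⟩
  have hi := congrArg (i ∈ ·) hk
  simp only [mem_filter, mem_univ, true_and, mem_singleton, Bool.zero_eq_false] at hi
  cases hx : x i <;> simp_all [Bool.zero_eq_false]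

theorem exists_perm_of_hammingDist_eq_of_map_zero {g : (ι → Bool) → ι → Bool}
    (hg : ∀ x y, hammingDist (g x) (g y) = hammingDist x y) (h0 : g 0 = 0) :
    ∃ σ : Equiv.Perm ι, ∀ x, g x = x ∘ σ := by
  have hnorm : ∀ x, hammingNorm (g x) = hammingNorm x := fun x => by
    rw [← hammingDist_zero_right, ← hammingDist_zero_right, ← h0, hg, h0]
  have hsingle : ∀ j, ∃ k, g (Pi.single j true) = Pi.single k true := fun j =>
    exists_eq_single_of_hammingNorm_eq_one (by rw [hnorm, hammingNorm_single])
  choose τ hτ using hsingle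
  have hg_inj : g.Injective := fun x y hxy =>
    hammingDist_eq_zero.mp (by rw [← hg, hxy, hammingDist_self])
  have hτ_inj : τ.Injective := fun j j' hjj' => by
    have := congrFun (hg_inj (show g (Pi.single j true) = g (Pi.single j' true) by
      rw [hτ, hτ, hjj'])) j
    simpa [Pi.single_apply, Bool.zero_eq_false] using this
  set π := Equiv.ofBijective τ (Finite.injective_iff_bijective.mp hτ_inj)
  have hcoord : ∀ x j, g x (π j) = x j := fun x j => by
    rw [Bool.eq_iff_iff, apply_eq_true_iff_hammingDist_single_lt,
      apply_eq_true_iff_hammingDist_single_lt, Equiv.ofBijective_apply, ← hτ, hg, hnorm]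
  exact ⟨π.symm, fun x => funext fun i => by simpa using hcoord x (π.symm i)⟩

end Hamming

theorem stmt6_general {n : ℕ} (f : (Fin n → Bool) → (Fin n → Bool)) :
    (∀ x y : Fin n → Bool, hammingDist (f x) (f y) = hammingDist x y)
      ↔ ∃ (σ : Equiv.Perm (Fin n)) (b : Fin n → Bool),
          ∀ (x : Fin n → Bool) (i : Fin n), f x i = xor (x (σ i)) (b i) := by
  constructor
  · intro hf
    obtain ⟨σ, hσ⟩ := exists_perm_of_hammingDist_eq_of_map_zero
      (g := fun x i => xor (f x i) (f 0 i))
      (fun x y => by rw [hammingDist_xor_right, hf]) (funext fun i => Bool.xor_self _)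
    refine ⟨σ, f 0, fun x i => ?_⟩
    rw [← Function.comp_apply (f := x), ← hσ x, Bool.xor_assoc, Bool.xor_self, Bool.xor_false]
  · rintro ⟨σ, b, hf⟩ x y
    have hf' : ∀ x, f x = fun i => xor ((x ∘ σ) i) (b i) := fun x => funext (hf x)
    rw [hf', hf', hammingDist_xor_right, hammingDist_comp_equiv]

/-- Lemma 4 of the paper: a bijection of the Hamming cube preserves the
Hamming distance iff it is a signed coordinate permutation
`x ↦ (x_{σ(1)} ⊕ b_1, …, x_{σ(n)} ⊕ b_n)`. -/
theorem stmt6 {n : ℕ} (f : (Fin n → Bool) → (Fin n → Bool))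
    (hf : Function.Bijective f) :
    (∀ x y : Fin n → Bool, hammingDist (f x) (f y) = hammingDist x y)
      ↔ ∃ (σ : Equiv.Perm (Fin n)) (b : Fin n → Bool),
          ∀ (x : Fin n → Bool) (i : Fin n), f x i = xor (x (σ i)) (b i) :=
  stmt6_general f
end

section
/- Let 0 ≤ p < 1/2 and ε ≥ 0. Let (X, Y, A, B) be jointly distributed finite-valued random variables with X, Y taking values in {−1,1}, such that A is independent of B, X is conditionally independent of B given A, and Y is conditionally independent of A given B. Suppose that max{ |E[X]|, |E[Y]|, |E[XY] − (1−2p)| } ≤ ε, and that for every (a,b) with Pr(A=a, B=b) > 0, E[XY | A=a, B=b] ≤ (1−2p)·√( (1 − E[X|A=a]²)(1 − E[Y|B=b]²) ) + E[X|A=a]·E[Y|B=b] (i.e., the conditional correlation of X and Y given (A,B) is at most 1−2p almost surely). Then E[ E[X|A]² + E[Y|B]² ] ≤ 2ε(1+ε)/(1−2p). -/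
open Finset

set_option maxHeartbeats 1600000

/-- Encoding of `{-1,1}` by `Bool`: `true ↦ 1`, `false ↦ -1`. -/
noncomputable def sgn (b : Bool) : ℝ := if b then 1 else -1

lemma swap3 {X Y Z : Type*} [Fintype X] [Fintype Y] [Fintype Z] (f : X → Y → Z → ℝ) :
    ∑ x, ∑ y, ∑ z, f x y z = ∑ z, ∑ x, ∑ y, f x y z := by
  calc ∑ x, ∑ y, ∑ z, f x y z = ∑ x, ∑ z, ∑ y, f x y z :=
        Finset.sum_congr rfl fun x _ => Finset.sum_comm
    _ = ∑ z, ∑ x, ∑ y, f x y z := Finset.sum_comm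

/-- Lemma 11 of the paper: if `A ⟂ B`, `X ⟂ B | A`, `Y ⟂ A | B`, the first
moments of `(X,Y)` are `ε`-close to those of `DSBS(p)`, and the conditional correlation of
`X,Y` given `(A,B)` is at most `1-2p` a.s., then
`E[E[X|A]² + E[Y|B]²] ≤ 2ε(1+ε)/(1-2p)`. -/
theorem stmt13
    {A B : Type} [Fintype A] [Fintype B]
    (p : ℝ) (hp0 : 0 ≤ p) (hp : p < 1 / 2) (ε : ℝ) (hε : 0 ≤ ε)
    (P : Bool × Bool × A × B → ℝ) (hP : IsPMF P)
    -- marginals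
    (pA : A → ℝ) (hpA : ∀ a, pA a = ∑ x, ∑ y, ∑ b, P (x, y, a, b))
    (pB : B → ℝ) (hpB : ∀ b, pB b = ∑ x, ∑ y, ∑ a, P (x, y, a, b))
    (pAB : A → B → ℝ) (hpAB : ∀ a b, pAB a b = ∑ x, ∑ y, P (x, y, a, b))
    -- A is independent of B
    (hindep : ∀ a b, pAB a b = pA a * pB b)
    -- X ⟂ B | A :  P(x,a,b)·P(a) = P(x,a)·P(a,b)
    (hXB : ∀ x a b,
      (∑ y, P (x, y, a, b)) * pA a = (∑ y, ∑ b', P (x, y, a, b')) * pAB a b)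
    -- Y ⟂ A | B :  P(y,a,b)·P(b) = P(y,b)·P(a,b)
    (hYA : ∀ y a b,
      (∑ x, P (x, y, a, b)) * pB b = (∑ x, ∑ a', P (x, y, a', b)) * pAB a b)
    -- conditional expectations E[X|A=·] and E[Y|B=·]
    (eXA : A → ℝ) (heXA : ∀ a, eXA a * pA a = ∑ x, ∑ y, ∑ b, sgn x * P (x, y, a, b))
    (eYB : B → ℝ) (heYB : ∀ b, eYB b * pB b = ∑ x, ∑ y, ∑ a, sgn y * P (x, y, a, b))
    -- |E[X]| ≤ ε, |E[Y]| ≤ ε, |E[XY] - (1-2p)| ≤ ε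
    (hEX : |∑ z : Bool × Bool × A × B, sgn z.1 * P z| ≤ ε)
    (hEY : |∑ z : Bool × Bool × A × B, sgn z.2.1 * P z| ≤ ε)
    (hEXY : |(∑ z : Bool × Bool × A × B, sgn z.1 * sgn z.2.1 * P z) - (1 - 2 * p)| ≤ ε)
    -- conditional correlation at most 1-2p on every positive-probability atom (a,b)
    (hcorr : ∀ a b, 0 < pAB a b →
      (∑ x, ∑ y, sgn x * sgn y * P (x, y, a, b))
        ≤ ((1 - 2 * p) * Real.sqrt ((1 - (eXA a) ^ 2) * (1 - (eYB b) ^ 2))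
            + eXA a * eYB b) * pAB a b) :
    (∑ a, pA a * (eXA a) ^ 2) + (∑ b, pB b * (eYB b) ^ 2)
      ≤ 2 * ε * (1 + ε) / (1 - 2 * p) := by
  obtain ⟨hPnn, hPsum⟩ := hP
  set c : ℝ := 1 - 2 * p with hcdef
  have hc : 0 < c := by rw [hcdef]; linarith
  have hpAnn : ∀ a, 0 ≤ pA a := fun a => by
    rw [hpA]
    exact Finset.sum_nonneg fun _ _ => Finset.sum_nonneg fun _ _ =>
      Finset.sum_nonneg fun _ _ => hPnn _
  have hpBnn : ∀ b, 0 ≤ pB b := fun b => by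
    rw [hpB]
    exact Finset.sum_nonneg fun _ _ => Finset.sum_nonneg fun _ _ =>
      Finset.sum_nonneg fun _ _ => hPnn _
  have hzsum : ∀ f : Bool × Bool × A × B → ℝ,
      ∑ z, f z = ∑ x, ∑ y, ∑ a, ∑ b, f (x, y, a, b) := fun f => by
    simp [Fintype.sum_prod_type]
  have hsA : ∑ a, pA a = 1 := by
    calc ∑ a, pA a = ∑ a, ∑ x, ∑ y, ∑ b, P (x, y, a, b) :=
          Finset.sum_congr rfl fun a _ => hpA a
      _ = ∑ x, ∑ y, ∑ a, ∑ b, P (x, y, a, b) :=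
          (swap3 fun x y a => ∑ b, P (x, y, a, b)).symm
      _ = 1 := by rw [← hzsum]; exact hPsum
  have hsB : ∑ b, pB b = 1 := by
    calc ∑ b, pB b = ∑ b, ∑ x, ∑ y, ∑ a, P (x, y, a, b) :=
          Finset.sum_congr rfl fun b _ => hpB b
      _ = ∑ x, ∑ y, ∑ b, ∑ a, P (x, y, a, b) :=
          (swap3 fun x y b => ∑ a, P (x, y, a, b)).symm
      _ = ∑ x, ∑ y, ∑ a, ∑ b, P (x, y, a, b) :=
          Finset.sum_congr rfl fun x _ => Finset.sum_congr rfl fun y _ => Finset.sum_comm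
      _ = 1 := by rw [← hzsum]; exact hPsum
  have hmX : ∑ a, eXA a * pA a = ∑ z : Bool × Bool × A × B, sgn z.1 * P z := by
    calc ∑ a, eXA a * pA a = ∑ a, ∑ x, ∑ y, ∑ b, sgn x * P (x, y, a, b) :=
          Finset.sum_congr rfl fun a _ => heXA a
      _ = ∑ x, ∑ y, ∑ a, ∑ b, sgn x * P (x, y, a, b) :=
          (swap3 fun x y a => ∑ b, sgn x * P (x, y, a, b)).symm
      _ = ∑ z : Bool × Bool × A × B, sgn z.1 * P z := (hzsum (fun z => sgn z.1 * P z)).symm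
  have hmY : ∑ b, eYB b * pB b = ∑ z : Bool × Bool × A × B, sgn z.2.1 * P z := by
    calc ∑ b, eYB b * pB b = ∑ b, ∑ x, ∑ y, ∑ a, sgn y * P (x, y, a, b) :=
          Finset.sum_congr rfl fun b _ => heYB b
      _ = ∑ x, ∑ y, ∑ b, ∑ a, sgn y * P (x, y, a, b) :=
          (swap3 fun x y b => ∑ a, sgn y * P (x, y, a, b)).symm
      _ = ∑ x, ∑ y, ∑ a, ∑ b, sgn y * P (x, y, a, b) :=
          Finset.sum_congr rfl fun x _ => Finset.sum_congr rfl fun y _ => Finset.sum_comm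
      _ = ∑ z : Bool × Bool × A × B, sgn z.2.1 * P z := (hzsum (fun z => sgn z.2.1 * P z)).symm
  have hEXYsum : (∑ z : Bool × Bool × A × B, sgn z.1 * sgn z.2.1 * P z)
      = ∑ a, ∑ b, ∑ x, ∑ y, sgn x * sgn y * P (x, y, a, b) := by
    calc (∑ z : Bool × Bool × A × B, sgn z.1 * sgn z.2.1 * P z)
        = ∑ x, ∑ y, ∑ a, ∑ b, sgn x * sgn y * P (x, y, a, b) := hzsum (fun z => sgn z.1 * sgn z.2.1 * P z)
      _ = ∑ a, ∑ x, ∑ y, ∑ b, sgn x * sgn y * P (x, y, a, b) :=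
          swap3 fun x y a => ∑ b, sgn x * sgn y * P (x, y, a, b)
      _ = ∑ a, ∑ b, ∑ x, ∑ y, sgn x * sgn y * P (x, y, a, b) :=
          Finset.sum_congr rfl fun a _ => swap3 fun x y b => sgn x * sgn y * P (x, y, a, b)
  -- pointwise key bound
  have key : ∀ a b, (∑ x, ∑ y, sgn x * sgn y * P (x, y, a, b))
      ≤ (c * (1 - ((eXA a) ^ 2 + (eYB b) ^ 2) / 2) + eXA a * eYB b) * (pA a * pB b) := by
    intro a b
    have hABnn : 0 ≤ pAB a b := by
      rw [hpAB]
      exact Finset.sum_nonneg fun _ _ => Finset.sum_nonneg fun _ _ => hPnn _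
    rcases hABnn.lt_or_eq with hpos | h0
    · have hApos : 0 < pA a := by
        rcases (hpAnn a).lt_or_eq with h | h
        · exact h
        · exfalso; rw [hindep, ← h, zero_mul] at hpos; exact lt_irrefl _ hpos
      have hBpos : 0 < pB b := by
        rcases (hpBnn b).lt_or_eq with h | h
        · exact h
        · exfalso; rw [hindep, ← h, mul_zero] at hpos; exact lt_irrefl _ hpos
      have habs1 : |eXA a| ≤ 1 := by
        have h1 : |eXA a * pA a| ≤ pA a := by
          rw [heXA]
          rw [hpA]
          refine (Finset.abs_sum_le_sum_abs _ _).trans ?_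
          refine Finset.sum_le_sum fun x _ => ?_
          refine (Finset.abs_sum_le_sum_abs _ _).trans ?_
          refine Finset.sum_le_sum fun y _ => ?_
          refine (Finset.abs_sum_le_sum_abs _ _).trans ?_
          refine Finset.sum_le_sum fun b' _ => ?_
          rw [abs_mul]
          have hs : |sgn x| = 1 := by cases x <;> simp [sgn]
          rw [hs, one_mul, abs_of_nonneg (hPnn _)]
        rw [abs_mul, abs_of_nonneg (hpAnn a)] at h1
        exact le_of_mul_le_mul_right (by rw [one_mul]; exact h1) hApos
      have habs2 : |eYB b| ≤ 1 := by
        have h1 : |eYB b * pB b| ≤ pB b := by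
          rw [heYB]
          rw [hpB]
          refine (Finset.abs_sum_le_sum_abs _ _).trans ?_
          refine Finset.sum_le_sum fun x _ => ?_
          refine (Finset.abs_sum_le_sum_abs _ _).trans ?_
          refine Finset.sum_le_sum fun y _ => ?_
          refine (Finset.abs_sum_le_sum_abs _ _).trans ?_
          refine Finset.sum_le_sum fun a' _ => ?_
          rw [abs_mul]
          have hs : |sgn y| = 1 := by cases y <;> simp [sgn]
          rw [hs, one_mul, abs_of_nonneg (hPnn _)]
        rw [abs_mul, abs_of_nonneg (hpBnn b)] at h1
        exact le_of_mul_le_mul_right (by rw [one_mul]; exact h1) hBpos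
      have hα : (eXA a) ^ 2 ≤ 1 := by
        nlinarith [sq_abs (eXA a), abs_nonneg (eXA a)]
      have hβ : (eYB b) ^ 2 ≤ 1 := by
        nlinarith [sq_abs (eYB b), abs_nonneg (eYB b)]
      have hssq : Real.sqrt ((1 - (eXA a) ^ 2) * (1 - (eYB b) ^ 2))
          ≤ 1 - ((eXA a) ^ 2 + (eYB b) ^ 2) / 2 := by
        have h2 : (1 - (eXA a) ^ 2) * (1 - (eYB b) ^ 2)
            ≤ (1 - ((eXA a) ^ 2 + (eYB b) ^ 2) / 2) ^ 2 := by
          nlinarith [sq_nonneg ((eXA a) ^ 2 - (eYB b) ^ 2)]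
        calc Real.sqrt ((1 - (eXA a) ^ 2) * (1 - (eYB b) ^ 2))
            ≤ Real.sqrt ((1 - ((eXA a) ^ 2 + (eYB b) ^ 2) / 2) ^ 2) := Real.sqrt_le_sqrt h2
          _ = 1 - ((eXA a) ^ 2 + (eYB b) ^ 2) / 2 := Real.sqrt_sq (by nlinarith)
      have hcb := hcorr a b hpos
      rw [hindep] at hcb
      refine hcb.trans ?_
      have hpp : 0 ≤ pA a * pB b := mul_nonneg hApos.le hBpos.le
      have hcs : c * Real.sqrt ((1 - (eXA a) ^ 2) * (1 - (eYB b) ^ 2))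
          ≤ c * (1 - ((eXA a) ^ 2 + (eYB b) ^ 2) / 2) :=
        mul_le_mul_of_nonneg_left hssq hc.le
      exact mul_le_mul_of_nonneg_right (by linarith) hpp
    · have h0' : ∑ x, ∑ y, P (x, y, a, b) = 0 := by rw [← hpAB, ← h0]
      have hz : ∀ x y, P (x, y, a, b) = 0 := by
        intro x y
        have h1 := (Finset.sum_eq_zero_iff_of_nonneg
          (fun x _ => Finset.sum_nonneg fun y _ => hPnn _)).1 h0' x (Finset.mem_univ x)
        exact (Finset.sum_eq_zero_iff_of_nonneg (fun y _ => hPnn _)).1 h1 y (Finset.mem_univ y)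
      have hl : ∑ x, ∑ y, sgn x * sgn y * P (x, y, a, b) = 0 :=
        Finset.sum_eq_zero fun x _ => Finset.sum_eq_zero fun y _ => by rw [hz, mul_zero]
      have hr : pA a * pB b = 0 := by rw [← hindep, ← h0]
      rw [hl, hr, mul_zero]
  -- expansion of the double sum of the bound
  have inner : ∀ a, (∑ b, (c * (1 - ((eXA a) ^ 2 + (eYB b) ^ 2) / 2) + eXA a * eYB b)
        * (pA a * pB b))
      = (∑ b, pB b) * ((c - c / 2 * (eXA a) ^ 2) * pA a)
        + (∑ b, pB b * (eYB b) ^ 2) * (-(c / 2) * pA a)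
        + (∑ b, eYB b * pB b) * (eXA a * pA a) := by
    intro a
    rw [Finset.sum_mul, Finset.sum_mul, Finset.sum_mul, ← Finset.sum_add_distrib,
      ← Finset.sum_add_distrib]
    exact Finset.sum_congr rfl fun b _ => by ring
  have expand : (∑ a, ∑ b, (c * (1 - ((eXA a) ^ 2 + (eYB b) ^ 2) / 2) + eXA a * eYB b)
        * (pA a * pB b))
      = c - c / 2 * ((∑ a, pA a * (eXA a) ^ 2) + (∑ b, pB b * (eYB b) ^ 2))
        + (∑ a, eXA a * pA a) * (∑ b, eYB b * pB b) := by
    rw [Finset.sum_congr rfl fun a _ => inner a]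
    simp only [hsB, one_mul]
    rw [show (∑ a, ((c - c / 2 * (eXA a) ^ 2) * pA a
          + (∑ b, pB b * (eYB b) ^ 2) * (-(c / 2) * pA a)
          + (∑ b, eYB b * pB b) * (eXA a * pA a)))
        = (∑ a, pA a) * (c - c / 2 * (∑ b, pB b * (eYB b) ^ 2))
          + (∑ a, pA a * (eXA a) ^ 2) * (-(c / 2))
          + (∑ a, eXA a * pA a) * (∑ b, eYB b * pB b) from by
      rw [Finset.sum_mul, Finset.sum_mul, Finset.sum_mul, ← Finset.sum_add_distrib,
        ← Finset.sum_add_distrib]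
      exact Finset.sum_congr rfl fun a _ => by ring]
    rw [hsA]
    ring
  -- assemble
  have hmXb : |∑ a, eXA a * pA a| ≤ ε := by rw [hmX]; exact hEX
  have hmYb : |∑ b, eYB b * pB b| ≤ ε := by rw [hmY]; exact hEY
  have hprod : (∑ a, eXA a * pA a) * (∑ b, eYB b * pB b) ≤ ε * ε :=
    calc (∑ a, eXA a * pA a) * (∑ b, eYB b * pB b)
        ≤ |(∑ a, eXA a * pA a) * (∑ b, eYB b * pB b)| := le_abs_self _
      _ = |∑ a, eXA a * pA a| * |∑ b, eYB b * pB b| := abs_mul _ _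
      _ ≤ ε * ε := mul_le_mul hmXb hmYb (abs_nonneg _) hε
  have hlow : c - ε ≤ ∑ z : Bool × Bool × A × B, sgn z.1 * sgn z.2.1 * P z := by
    have h := (abs_le.1 hEXY).1
    linarith
  have hup : (∑ z : Bool × Bool × A × B, sgn z.1 * sgn z.2.1 * P z)
      ≤ c - c / 2 * ((∑ a, pA a * (eXA a) ^ 2) + (∑ b, pB b * (eYB b) ^ 2))
        + (∑ a, eXA a * pA a) * (∑ b, eYB b * pB b) := by
    rw [hEXYsum, ← expand]
    exact Finset.sum_le_sum fun a _ => Finset.sum_le_sum fun b _ => key a b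
  rw [le_div_iff₀ hc]
  nlinarith [hlow, hup, hprod]
end
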